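/- arXiv:2003.13651 — 2 statements merged into one kernel-verified Lean document; each statement's English description precedes it below -/
import Mathlib

section
/- In the logic QRC₁, for every formula φ, the sequent φ ⊢ ◇φ is not derivable. -/
/-- A signature: constants and relation symbols with arities (no function symbols). -/
structure Signature where
  Const : Type
  Rel : Type
  arity : Rel → ℕ

/-- Terms: variables (numbered) or constants. -/
inductive Term (Sig : Signature) : Type where
  | var : ℕ → Term Sig
  | const : Sig.Const → Term Sig

/-- Strictly positive formulas of QRC₁. -/
inductive Formula (Sig : Signature) : Type where
  | top : Formula Sig
  | rel : (S : Sig.Rel) → (Fin (Sig.arity S) → Term Sig) → Formula Sig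
  | and : Formula Sig → Formula Sig → Formula Sig
  | dia : Formula Sig → Formula Sig
  | all : ℕ → Formula Sig → Formula Sig

namespace Term

variable {Sig : Signature}

def fv : Term Sig → Set ℕ
  | var x => {x}
  | const _ => ∅

def consts : Term Sig → Set Sig.Const
  | var _ => ∅
  | const c => {c}

def subst (t : Term Sig) (x : ℕ) (u : Term Sig) : Term Sig :=
  match t with
  | var y => if y = x then u else var y
  | const c => const c

end Term

namespace Formula

variable {Sig : Signature}

/-- Free variables of a formula. -/
def fv : Formula Sig → Set ℕ
  | top => ∅
  | rel _ ts => ⋃ i, (ts i).fv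
  | and φ ψ => φ.fv ∪ ψ.fv
  | dia φ => φ.fv
  | all x φ => φ.fv \ {x}

/-- Constants occurring in a formula. -/
def consts : Formula Sig → Set Sig.Const
  | top => ∅
  | rel _ ts => ⋃ i, (ts i).consts
  | and φ ψ => φ.consts ∪ ψ.consts
  | dia φ => φ.consts
  | all _ φ => φ.consts

/-- Simultaneous substitution of the term `u` for the free occurrences of `x`. -/
def subst : Formula Sig → ℕ → Term Sig → Formula Sig
  | top, _, _ => top
  | rel S ts, x, u => rel S (fun i => (ts i).subst x u)
  | and φ ψ, x, u => and (φ.subst x u) (ψ.subst x u)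
  | dia φ, x, u => dia (φ.subst x u)
  | all y φ, x, u => if y = x then all y φ else all y (φ.subst x u)

/-- `t` is free for `x` in `φ`: no free variable of `t` becomes bound in `φ[x/t]`. -/
def freeFor : Formula Sig → ℕ → Term Sig → Prop
  | top, _, _ => True
  | rel _ _, _, _ => True
  | and φ ψ, x, t => φ.freeFor x t ∧ ψ.freeFor x t
  | dia φ, x, t => φ.freeFor x t
  | all y φ, x, t => x ∉ (Formula.all y φ).fv ∨ (y ∉ t.fv ∧ φ.freeFor x t)

/-- Modal depth. -/
def mdepth : Formula Sig → ℕ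
  | top => 0
  | rel _ _ => 0
  | and φ ψ => max φ.mdepth ψ.mdepth
  | dia φ => φ.mdepth + 1
  | all _ φ => φ.mdepth

def size : Formula Sig → ℕ
  | top => 1
  | rel _ _ => 1
  | and φ ψ => φ.size + ψ.size + 1
  | dia φ => φ.size + 1
  | all _ φ => φ.size + 1

theorem size_subst (φ : Formula Sig) (x : ℕ) (t : Term Sig) :
    (φ.subst x t).size = φ.size := by
  induction φ with
  | top => rfl
  | rel S ts => rfl
  | and φ ψ ihφ ihψ => simp [Formula.subst, Formula.size, ihφ, ihψ]
  | dia φ ih => simp [Formula.subst, Formula.size, ih]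
  | all y φ ih =>
      by_cases h : y = x <;> simp [Formula.subst, Formula.size, h, ih]

end Formula

/-- Derivability of sequents `φ ⊢ ψ` in QRC₁. -/
inductive Derives {Sig : Signature} : Formula Sig → Formula Sig → Prop where
  | topIntro (φ : Formula Sig) : Derives φ .top
  | refl (φ : Formula Sig) : Derives φ φ
  | andE₁ (φ ψ : Formula Sig) : Derives (.and φ ψ) φ
  | andE₂ (φ ψ : Formula Sig) : Derives (.and φ ψ) ψ
  | andI {φ ψ χ : Formula Sig} : Derives φ ψ → Derives φ χ → Derives φ (.and ψ χ)
  | cut {φ ψ χ : Formula Sig} : Derives φ ψ → Derives ψ χ → Derives φ χ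
  | nec {φ ψ : Formula Sig} : Derives φ ψ → Derives (.dia φ) (.dia ψ)
  | diaTrans (φ : Formula Sig) : Derives (.dia (.dia φ)) (.dia φ)
  | diaAll (x : ℕ) (φ : Formula Sig) : Derives (.dia (.all x φ)) (.all x (.dia φ))
  | allR {φ ψ : Formula Sig} {x : ℕ} : Derives φ ψ → x ∉ φ.fv → Derives φ (.all x ψ)
  | allL {φ ψ : Formula Sig} {x : ℕ} {t : Term Sig} :
      Derives (φ.subst x t) ψ → φ.freeFor x t → Derives (.all x φ) ψ
  | termInst {φ ψ : Formula Sig} {x : ℕ} {t : Term Sig} :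
      Derives φ ψ → φ.freeFor x t → ψ.freeFor x t →
      Derives (φ.subst x t) (ψ.subst x t)
  | constGen {φ ψ : Formula Sig} {x : ℕ} {c : Sig.Const} :
      Derives (φ.subst x (.const c)) (ψ.subst x (.const c)) →
      c ∉ φ.consts → c ∉ ψ.consts → Derives φ ψ

/-- Extension of a signature by a collection `C` of new constants. -/
def Signature.extend (Sig : Signature) (C : Type) : Signature :=
  ⟨Sig.Const ⊕ C, Sig.Rel, Sig.arity⟩

/-- A term of `Sig` seen as a term of the extended signature. -/
def Term.lift {Sig : Signature} {C : Type} : Term Sig → Term (Sig.extend C)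
  | .var x => .var x
  | .const c => .const (Sum.inl c)

/-- A formula of `Sig` seen as a formula of the extended signature. -/
def Formula.lift {Sig : Signature} {C : Type} : Formula Sig → Formula (Sig.extend C)
  | .top => .top
  | .rel S ts => .rel S (fun i => (ts i).lift)
  | .and φ ψ => .and φ.lift ψ.lift
  | .dia φ => .dia φ.lift
  | .all x φ => .all x φ.lift

/-! ### Relational semantics -/

/-- A relational model (on an underlying frame `⟨W, R, D⟩`):
worlds, accessibility, finite domains, constant and relation interpretations. -/
structure Model (Sig : Signature) where
  W : Type
  U : Type
  nonempty : Nonempty W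
  R : W → W → Prop
  D : W → Set U
  Dfin : ∀ w, (D w).Finite
  I : W → Sig.Const → U
  Imem : ∀ w c, I w c ∈ D w
  J : (w : W) → (S : Sig.Rel) → Set (Fin (Sig.arity S) → U)
  Jmem : ∀ w S f, f ∈ J w S → ∀ i, f i ∈ D w

namespace Model

variable {Sig : Signature}

/-- A `w`-assignment: a map from variables into the domain of `w`. -/
def IsAssignment (M : Model Sig) (w : M.W) (g : ℕ → M.U) : Prop :=
  ∀ n, g n ∈ M.D w

/-- Value of a term at a world under an assignment. -/
def tval (M : Model Sig) (w : M.W) (g : ℕ → M.U) : Term Sig → M.U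
  | .var x => g x
  | .const c => M.I w c

end Model

/-- `Γ`-alternative assignments: they agree on all variables outside `Γ`. -/
def AltOn {U : Type} (Γ : Set ℕ) (g h : ℕ → U) : Prop :=
  ∀ y, y ∉ Γ → g y = h y

/-- Truth at a world under an assignment. -/
def Model.Forces {Sig : Signature} (M : Model Sig) :
    M.W → (ℕ → M.U) → Formula Sig → Prop
  | _, _, .top => True
  | w, g, .rel S ts => (fun i => M.tval w g (ts i)) ∈ M.J w S
  | w, g, .and φ ψ => M.Forces w g φ ∧ M.Forces w g ψ
  | w, g, .dia φ => ∃ v, M.R w v ∧ M.Forces v g φ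
  | w, g, .all x φ =>
      ∀ h : ℕ → M.U, M.IsAssignment w h → AltOn {x} g h → M.Forces w h φ

/-- Adequate models: inclusive, transitive, and concordant. -/
def Model.Adequate {Sig : Signature} (M : Model Sig) : Prop :=
  (∀ w u, M.R w u → M.D w ⊆ M.D u) ∧
  (∀ w u v, M.R w u → M.R u v → M.R w v) ∧
  (∀ w u, M.R w u → ∀ c, M.I w c = M.I u c)

/-- The model `M` restricted at the world `r`. -/
def Model.restrict {Sig : Signature} (M : Model Sig) (r : M.W) : Model Sig where
  W := {w : M.W // w = r ∨ M.R r w}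
  U := M.U
  nonempty := ⟨⟨r, Or.inl rfl⟩⟩
  R w v := M.R w.1 v.1
  D w := M.D w.1
  Dfin w := M.Dfin w.1
  I w c := M.I w.1 c
  Imem w c := M.Imem w.1 c
  J w S := M.J w.1 S
  Jmem w S f h i := M.Jmem w.1 S f h i

/-- The model `M` restricted at `r`, with the interpretation of the constant `c`
set to `d ∈ M_r` at every world. -/
noncomputable def Model.restrictSubst {Sig : Signature} (M : Model Sig) (r : M.W) (c : Sig.Const)
    (d : M.U) (hd : d ∈ M.D r) (hinc : ∀ w u, M.R w u → M.D w ⊆ M.D u) : Model Sig :=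
  { M.restrict r with
    I := fun w c' => @ite _ (c' = c) (Classical.propDecidable _) d (M.I w.1 c')
    Imem := by
      intro w c'
      by_cases h : c' = c
      · simp only [h, if_pos rfl]
        rcases w.2 with h' | h'
        · show d ∈ M.D w.1; rw [h']; exact hd
        · exact hinc r w.1 h' hd
      · show @ite _ (c' = c) (Classical.propDecidable _) d (M.I w.1 c') ∈ M.D w.1
        rw [if_neg h]
        exact M.Imem w.1 c' }

/-! ### Pairs, closure, maximal consistency -/

/-- A pair of sets of formulas (positive and negative part). -/
structure Pair (Sig : Signature) where
  pos : Set (Formula Sig)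
  neg : Set (Formula Sig)

/-- `Γ ⊢ φ`: some finite conjunction of members of `Γ` derives `φ`. -/
def SetDerives {Sig : Signature} (Γ : Set (Formula Sig)) (φ : Formula Sig) : Prop :=
  ∃ (γ : Formula Sig) (l : List (Formula Sig)),
    γ ∈ Γ ∧ (∀ δ ∈ l, δ ∈ Γ) ∧ Derives (l.foldl Formula.and γ) φ

namespace Pair

variable {Sig : Signature}

/-- A pair is consistent if no member of the negative part follows from the positive part. -/
def Consistent (p : Pair Sig) : Prop :=
  ∀ δ ∈ p.neg, ¬ SetDerives p.pos δ

/-- `q` is a `Φ`-extension of `p`. -/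
def Ext (p q : Pair Sig) (Φ : Set (Formula Sig)) : Prop :=
  p.pos ⊆ q.pos ∧ q.pos ⊆ Φ ∧ p.neg ⊆ q.neg ∧ q.neg ⊆ Φ

/-- `Φ`-maximal consistency. -/
def MaxCons (p : Pair Sig) (Φ : Set (Formula Sig)) : Prop :=
  p.Consistent ∧ p.pos ⊆ Φ ∧ p.neg ⊆ Φ ∧
    ∀ q : Pair Sig, p.Ext q Φ → q.Consistent → q = p

/-- A pair is fully witnessed if every negative universal has a constant witness. -/
def FullyWitnessed (p : Pair Sig) : Prop :=
  ∀ (x : ℕ) (φ : Formula Sig), Formula.all x φ ∈ p.neg →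
    ∃ c : Sig.Const, φ.subst x (.const c) ∈ p.neg

end Pair

/-- Closure of a formula under a set of constants. -/
def Cl {Sig : Signature} (C : Set Sig.Const) : Formula Sig → Set (Formula Sig)
  | .top => {.top}
  | .rel S ts => {.rel S ts, .top}
  | .and φ ψ => {.and φ ψ} ∪ Cl C φ ∪ Cl C ψ
  | .dia φ => {.dia φ} ∪ Cl C φ
  | .all x φ => {.all x φ} ∪ ⋃ c ∈ C, Cl C (φ.subst x (.const c))
termination_by φ => φ.size
decreasing_by
  all_goals simp [Formula.size, Formula.size_subst]
  all_goals omega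

/-- Closure of a set of formulas under a set of constants. -/
def ClSet {Sig : Signature} (C : Set Sig.Const) (Γ : Set (Formula Sig)) :
    Set (Formula Sig) :=
  ⋃ φ ∈ Γ, Cl C φ

/-- Modal depth of a set of formulas (as a supremum in ℕ). -/
noncomputable def mdepthSet {Sig : Signature} (Γ : Set (Formula Sig)) : ℕ :=
  sSup (Formula.mdepth '' Γ)

/-- The relation `R̂` between pairs. -/
def hatR {Sig : Signature} (p q : Pair Sig) : Prop :=
  (∀ φ : Formula Sig, Formula.dia φ ∈ p.neg → φ ∈ q.neg ∧ Formula.dia φ ∈ q.neg) ∧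
  (∃ ψ : Formula Sig, Formula.dia ψ ∈ p.pos ∧ Formula.dia ψ ∈ q.neg)

theorem Formula.mdepth_subst {Sig : Signature} (φ : Formula Sig) (x : ℕ) (t : Term Sig) :
    (φ.subst x t).mdepth = φ.mdepth := by
  induction φ with
  | top | rel => rfl
  | and φ ψ ihφ ihψ => simp only [Formula.subst, Formula.mdepth, ihφ, ihψ]
  | dia φ ih => simp only [Formula.subst, Formula.mdepth, ih]
  | all y φ ih => by_cases h : y = x <;> simp [Formula.subst, Formula.mdepth, h, ih]

theorem Derives.mdepth_le {Sig : Signature} {φ ψ : Formula Sig} (h : Derives φ ψ) :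
    ψ.mdepth ≤ φ.mdepth := by
  induction h with
  | topIntro => exact Nat.zero_le _
  | refl => exact le_rfl
  | andE₁ => exact le_max_left _ _
  | andE₂ => exact le_max_right _ _
  | andI _ _ ih₁ ih₂ => exact max_le ih₁ ih₂
  | cut _ _ ih₁ ih₂ => exact ih₂.trans ih₁
  | nec _ ih => exact Nat.succ_le_succ ih
  | diaTrans => exact Nat.le_succ _
  | diaAll => exact le_rfl
  | allR _ _ ih => exact ih
  | allL _ _ ih => rwa [Formula.mdepth_subst] at ih
  | termInst _ _ _ ih => rwa [Formula.mdepth_subst, Formula.mdepth_subst]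
  | constGen _ _ _ ih => rwa [Formula.mdepth_subst, Formula.mdepth_subst] at ih

/-- In QRC₁, for every formula φ, the sequent φ ⊢ ◇φ is not derivable. -/
theorem qrc1_irreflexivity (Sig : Signature) (φ : Formula Sig) :
    ¬ Derives φ (Formula.dia φ) :=
  fun h => Nat.not_succ_le_self _ h.mdepth_le
end

section
/- Lindenbaum-type lemma for QRC₁: given a finite signature Σ with set of constants C, a finite set Φ of closed formulas in the language of Σ, and a consistent pair p ⊆ Cl_C(Φ), there exist a finite set of constants D ⊇ C and a pair q ⊇ p in the language of Σ extended by D such that q is Cl_D(Φ)-maximal consistent and fully witnessed, and mdepth(q⁺) = mdepth(p⁺). -/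
/-!
Take for `q⁺` the formulas of `Cl_D(Φ)` derivable from `p⁺` and for `q⁻` the others. Such a
partition is automatically `Cl_D(Φ)`-maximal consistent, and since derivations never raise the
modal depth, `q⁺` has the modal depth of `p⁺`.

Full witnessing is where `D` matters: `D` adds to `C` more fresh constants than the size of
any formula of `Φ`. A formula `∀x ψ` in the closure of `ρ ∈ Φ` contains at most `size ρ`
constants outside `C`, so some fresh `c` does not occur in `ψ`. If `p⁺ ⊢ ψ[x/c]`, then, as
`p⁺` is closed and free of `c`, generalization on the constant `c` gives `p⁺ ⊢ ∀x ψ`; so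
`∀x ψ ∈ q⁻` forces `ψ[x/c] ∈ q⁻`.
-/

namespace Formula

variable {Sig : Signature}

theorem subst_of_notMem_fv {φ : Formula Sig} {x : ℕ} (u : Term Sig) (h : x ∉ φ.fv) :
    φ.subst x u = φ := by
  induction φ with
  | top => rfl
  | rel S ts =>
    simp only [fv, Set.mem_iUnion, not_exists] at h
    simp only [subst, rel.injEq, heq_eq_eq, true_and]
    funext i
    cases hi : ts i with
    | var y =>
      have : y ≠ x := by simpa [hi, Term.fv, eq_comm] using h i
      simp [Term.subst, this]
    | const c => rfl
  | and φ ψ ihφ ihψ =>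
    simp only [fv, Set.mem_union, not_or] at h
    simp [subst, ihφ h.1, ihψ h.2]
  | dia φ ih => simp [subst, ih h]
  | all y φ ih =>
    by_cases hyx : y = x
    · simp [subst, hyx]
    · have : x ∉ φ.fv := fun hx => h ⟨hx, Ne.symm hyx⟩
      simp [subst, hyx, ih this]

theorem mdepth_subst_s15 (φ : Formula Sig) (x : ℕ) (t : Term Sig) :
    (φ.subst x t).mdepth = φ.mdepth := by
  induction φ with
  | top | rel => rfl
  | and φ ψ ihφ ihψ => simp [subst, mdepth, ihφ, ihψ]
  | dia φ ih => simp [subst, mdepth, ih]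
  | all y φ ih => by_cases h : y = x <;> simp [subst, mdepth, h, ih]

theorem consts_subst_const (φ : Formula Sig) (x : ℕ) (c : Sig.Const) :
    (φ.subst x (.const c)).consts ⊆ φ.consts ∪ {c} := by
  induction φ with
  | top => simp [subst, consts]
  | rel S ts =>
    simp only [subst, consts, Set.iUnion_subset_iff]
    intro i
    cases hi : ts i with
    | var y => by_cases h : y = x <;> simp [Term.subst, Term.consts, h]
    | const d =>
      exact fun a ha => Or.inl (Set.mem_iUnion.2 ⟨i, by simpa [hi, Term.subst] using ha⟩)
  | and φ ψ ihφ ihψ =>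
    simp only [subst, consts]
    exact Set.union_subset (ihφ.trans (by gcongr; exact Set.subset_union_left))
      (ihψ.trans (by gcongr; exact Set.subset_union_right))
  | dia φ ih => exact ih
  | all y φ ih =>
    by_cases h : y = x
    · simp [subst, h, consts]
    · simpa only [subst, h, if_false, consts] using ih

theorem fv_subst_const (φ : Formula Sig) (x : ℕ) (c : Sig.Const) :
    (φ.subst x (.const c)).fv ⊆ φ.fv \ {x} := by
  induction φ with
  | top => simp [subst, fv]
  | rel S ts =>
    simp only [subst, fv, Set.iUnion_subset_iff]
    intro i
    cases hi : ts i with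
    | var y =>
      by_cases h : y = x
      · simp [Term.subst, Term.fv, h]
      · intro a ha
        simp only [Term.subst, h, if_false, Term.fv, Set.mem_singleton_iff] at ha
        subst ha
        exact ⟨Set.mem_iUnion.2 ⟨i, by simp [hi, Term.fv]⟩, h⟩
    | const d => simp [Term.subst, Term.fv]
  | and φ ψ ihφ ihψ =>
    simp only [subst, fv]
    exact Set.union_subset (ihφ.trans (by gcongr; exact Set.subset_union_left))
      (ihψ.trans (by gcongr; exact Set.subset_union_right))
  | dia φ ih => exact ih
  | all y φ ih =>
    by_cases h : y = x
    · subst h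
      simp [subst, fv]
    · simp only [subst, h, if_false, fv]
      intro a ⟨ha, hay⟩
      exact ⟨⟨(ih ha).1, hay⟩, (ih ha).2⟩

end Formula

/-- `Cl C φ` consists of the formulas reachable from `φ` by `ClStep C` steps (`mem_Cl_iff`), so
properties of the closure reduce to single steps. -/
inductive ClStep {Sig : Signature} (C : Set Sig.Const) : Formula Sig → Formula Sig → Prop
  | rel (S : Sig.Rel) (ts : Fin (Sig.arity S) → Term Sig) : ClStep C .top (.rel S ts)
  | andLeft (φ ψ : Formula Sig) : ClStep C φ (.and φ ψ)
  | andRight (φ ψ : Formula Sig) : ClStep C ψ (.and φ ψ)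
  | dia (φ : Formula Sig) : ClStep C φ (.dia φ)
  | all (x : ℕ) (φ : Formula Sig) {c : Sig.Const} :
      c ∈ C → ClStep C (φ.subst x (.const c)) (.all x φ)

namespace ClStep

variable {Sig : Signature} {C : Set Sig.Const} {φ ψ : Formula Sig}

theorem mono {D : Set Sig.Const} (h : ClStep C ψ φ) (hCD : C ⊆ D) : ClStep D ψ φ := by
  cases h with
  | all x φ hc => exact .all x φ (hCD hc)
  | rel | andLeft | andRight | dia => constructor

theorem Cl_subset (h : ClStep C ψ φ) : Cl C ψ ⊆ Cl C φ := by
  intro χ hχ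
  cases h with
  | rel => simp_all [Cl]
  | andLeft | andRight | dia => simp [Cl, hχ]
  | all x φ hc => simp only [Cl, Set.mem_union, Set.mem_iUnion]; exact Or.inr ⟨_, hc, hχ⟩

theorem mdepth_le (h : ClStep C ψ φ) : ψ.mdepth ≤ φ.mdepth := by
  cases h <;> simp [Formula.mdepth, Formula.mdepth_subst_s15]

theorem fv_subset (h : ClStep C ψ φ) : ψ.fv ⊆ φ.fv := by
  cases h with
  | all x φ => exact Formula.fv_subst_const φ x _
  | rel | andLeft | andRight | dia => simp [Formula.fv]

theorem exists_consts (h : ClStep C ψ φ) :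
    ∃ T : Finset Sig.Const, ↑T ⊆ C ∧ T.card + ψ.size ≤ φ.size ∧
      ψ.consts ⊆ φ.consts ∪ ↑T := by
  cases h with
  | @all x φ c hc =>
    refine ⟨{c}, by simpa using hc, by simp [Formula.size, Formula.size_subst, add_comm], ?_⟩
    simpa [Formula.consts] using Formula.consts_subst_const φ x c
  | rel | andLeft | andRight | dia =>
    exact ⟨∅, by simp, by simp only [Formula.size, Finset.card_empty]; omega,
      by simp [Formula.consts]⟩

end ClStep

section Closure

open Relation

variable {Sig : Signature} {C : Set Sig.Const} {φ ψ : Formula Sig}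

theorem mem_Cl_self (C : Set Sig.Const) (φ : Formula Sig) : φ ∈ Cl C φ := by
  cases φ <;> simp [Cl]

theorem mem_Cl_iff : ψ ∈ Cl C φ ↔ ReflTransGen (ClStep C) ψ φ := by
  refine ⟨fun h => ?_, fun h => ?_⟩
  · induction φ using Cl.induct with
    | case1 =>
      rw [Cl, Set.mem_singleton_iff] at h
      rw [h]
    | case2 S ts =>
      simp only [Cl, Set.mem_insert_iff, Set.mem_singleton_iff] at h
      rcases h with rfl | rfl
      exacts [.refl, .single (.rel S ts)]
    | case3 φ₁ φ₂ ih₁ ih₂ =>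
      simp only [Cl, Set.mem_union, Set.mem_singleton_iff] at h
      rcases h with (rfl | h) | h
      exacts [.refl, (ih₁ h).tail (.andLeft _ _), (ih₂ h).tail (.andRight _ _)]
    | case4 φ ih =>
      simp only [Cl, Set.mem_union, Set.mem_singleton_iff] at h
      rcases h with rfl | h
      exacts [.refl, (ih h).tail (.dia _)]
    | case5 x φ ih =>
      simp only [Cl, Set.mem_union, Set.mem_singleton_iff, Set.mem_iUnion] at h
      rcases h with rfl | ⟨c, hc, h⟩
      exacts [.refl, (ih c h).tail (.all x φ hc)]
  · induction h with
    | refl => exact mem_Cl_self C ψ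
    | tail _ hstep ih => exact hstep.Cl_subset ih

theorem Cl_subset_of_mem (h : ψ ∈ Cl C φ) : Cl C ψ ⊆ Cl C φ :=
  fun _ hχ => mem_Cl_iff.2 ((mem_Cl_iff.1 hχ).trans (mem_Cl_iff.1 h))

theorem Cl_mono {D : Set Sig.Const} (hCD : C ⊆ D) : Cl C φ ⊆ Cl D φ :=
  fun _ h => mem_Cl_iff.2 (ReflTransGen.mono (fun _ _ hs => hs.mono hCD) _ _ (mem_Cl_iff.1 h))

theorem subst_mem_Cl {x : ℕ} {c : Sig.Const} (h : .all x ψ ∈ Cl C φ) (hc : c ∈ C) :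
    ψ.subst x (.const c) ∈ Cl C φ :=
  Cl_subset_of_mem h (mem_Cl_iff.2 (.single (.all x ψ hc)))

theorem mdepth_le_of_mem_Cl (h : ψ ∈ Cl C φ) : ψ.mdepth ≤ φ.mdepth := by
  rw [mem_Cl_iff] at h
  induction h with
  | refl => rfl
  | tail _ hs ih => exact ih.trans hs.mdepth_le

theorem fv_subset_of_mem_Cl (h : ψ ∈ Cl C φ) : ψ.fv ⊆ φ.fv := by
  rw [mem_Cl_iff] at h
  induction h with
  | refl => rfl
  | tail _ hs ih => exact ih.trans hs.fv_subset

theorem exists_consts_of_mem_Cl (h : ψ ∈ Cl C φ) :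
    ∃ T : Finset Sig.Const, ↑T ⊆ C ∧ T.card + ψ.size ≤ φ.size ∧
      ψ.consts ⊆ φ.consts ∪ ↑T := by
  classical
  rw [mem_Cl_iff] at h
  induction h with
  | refl => exact ⟨∅, by simp, by simp, by simp⟩
  | tail _ hs ih =>
    obtain ⟨T₁, hT₁C, hT₁card, hT₁⟩ := ih
    obtain ⟨T₂, hT₂C, hT₂card, hT₂⟩ := hs.exists_consts
    refine ⟨T₁ ∪ T₂, by simp [hT₁C, hT₂C], ?_, ?_⟩
    · have := Finset.card_union_le T₁ T₂
      omega
    · refine hT₁.trans (Set.union_subset (hT₂.trans ?_) ?_) <;> intro a <;> simp <;> tauto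

end Closure

section SetDerives

variable {Sig : Signature} {Γ Δ : Set (Formula Sig)} {φ : Formula Sig}

theorem Formula.foldl_and_of_forall {P : Formula Sig → Prop}
    (hand : ∀ φ ψ, P φ → P ψ → P (.and φ ψ)) {γ : Formula Sig} {l : List (Formula Sig)}
    (hγ : P γ) (hl : ∀ δ ∈ l, P δ) : P (l.foldl .and γ) := by
  induction l generalizing γ with
  | nil => exact hγ
  | cons a l ih => exact ih (hand _ _ hγ (hl a (by simp))) fun δ hδ => hl δ (by simp [hδ])

theorem Derives.foldl_and_of_mem {γ δ : Formula Sig} {l : List (Formula Sig)}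
    (h : δ ∈ γ :: l) : Derives (l.foldl .and γ) δ := by
  induction l generalizing γ δ with
  | nil =>
    rw [List.mem_singleton.1 h]
    exact .refl _
  | cons a l ih =>
    have hhead := ih (γ := γ.and a) (δ := γ.and a) List.mem_cons_self
    simp only [List.mem_cons] at h
    rcases h with rfl | rfl | h
    · exact .cut hhead (.andE₁ _ _)
    · exact .cut hhead (.andE₂ _ _)
    · exact ih (List.mem_cons_of_mem _ h)

theorem setDerives_of_mem (h : φ ∈ Γ) : SetDerives Γ φ :=
  ⟨φ, [], h, by simp, .refl φ⟩

theorem SetDerives.and {ψ : Formula Sig} (h₁ : SetDerives Γ φ) (h₂ : SetDerives Γ ψ) :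
    SetDerives Γ (.and φ ψ) := by
  obtain ⟨γ₁, l₁, hγ₁, hl₁, hd₁⟩ := h₁
  obtain ⟨γ₂, l₂, hγ₂, hl₂, hd₂⟩ := h₂
  refine ⟨γ₁, l₁ ++ γ₂ :: l₂, hγ₁, ?_, ?_⟩
  · intro δ hδ
    simp only [List.mem_append, List.mem_cons] at hδ
    rcases hδ with hδ | rfl | hδ
    exacts [hl₁ δ hδ, hγ₂, hl₂ δ hδ]
  · have hproj : ∀ δ ∈ γ₁ :: (l₁ ++ γ₂ :: l₂),
        Derives ((l₁ ++ γ₂ :: l₂).foldl .and γ₁) δ := fun _ => Derives.foldl_and_of_mem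
    refine .andI (.cut (Formula.foldl_and_of_forall (fun _ _ => .andI) ?_ ?_) hd₁)
      (.cut (Formula.foldl_and_of_forall (fun _ _ => .andI) ?_ ?_) hd₂) <;>
    first
      | exact hproj _ (by simp)
      | exact fun δ hδ => hproj δ (by simp [hδ])

theorem SetDerives.of_forall_setDerives (hΔ : ∀ δ ∈ Δ, SetDerives Γ δ)
    (h : SetDerives Δ φ) : SetDerives Γ φ := by
  obtain ⟨γ, l, hγ, hl, hd⟩ := h
  obtain ⟨γ', l', hγ', hl', hd'⟩ := Formula.foldl_and_of_forall (fun _ _ => SetDerives.and)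
    (hΔ γ hγ) fun δ hδ => hΔ δ (hl δ hδ)
  exact ⟨γ', l', hγ', hl', .cut hd' hd⟩

theorem SetDerives.all_of_subst_const {x : ℕ} {c : Sig.Const} (hfv : ∀ γ ∈ Γ, γ.fv = ∅)
    (hc : ∀ γ ∈ Γ, c ∉ γ.consts) (hφ : c ∉ φ.consts)
    (h : SetDerives Γ (φ.subst x (.const c))) : SetDerives Γ (.all x φ) := by
  obtain ⟨γ, l, hγ, hl, hd⟩ := h
  have hclosed : (l.foldl .and γ).fv = ∅ :=
    Formula.foldl_and_of_forall (fun _ _ h₁ h₂ => by simp [Formula.fv, h₁, h₂])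
      (hfv γ hγ) fun δ hδ => hfv δ (hl δ hδ)
  have hfresh : c ∉ (l.foldl .and γ).consts :=
    Formula.foldl_and_of_forall (fun _ _ h₁ h₂ => by simp [Formula.consts, h₁, h₂])
      (hc γ hγ) fun δ hδ => hc δ (hl δ hδ)
  have hx : x ∉ (l.foldl .and γ).fv := by simp [hclosed]
  refine ⟨γ, l, hγ, hl, .allR (.constGen (x := x) ?_ hfresh hφ) hx⟩
  rwa [Formula.subst_of_notMem_fv _ hx]

theorem SetDerives.mdepth_le (hbdd : BddAbove (Formula.mdepth '' Γ)) (h : SetDerives Γ φ) :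
    φ.mdepth ≤ mdepthSet Γ := by
  obtain ⟨γ, l, hγ, hl, hd⟩ := h
  have hΓ : ∀ δ ∈ Γ, δ.mdepth ≤ mdepthSet Γ :=
    fun δ hδ => le_csSup hbdd ⟨δ, hδ, rfl⟩
  exact hd.mdepth_le.trans (Formula.foldl_and_of_forall (fun _ _ => max_le)
    (hΓ γ hγ) fun δ hδ => hΓ δ (hl δ hδ))

theorem mdepthSet_eq_of_setDerives (hbdd : BddAbove (Formula.mdepth '' Γ)) (hΓΔ : Γ ⊆ Δ)
    (hΔ : ∀ φ ∈ Δ, SetDerives Γ φ) : mdepthSet Δ = mdepthSet Γ := by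
  have hub : mdepthSet Γ ∈ upperBounds (Formula.mdepth '' Δ) := by
    rintro _ ⟨φ, hφ, rfl⟩
    exact (hΔ φ hφ).mdepth_le hbdd
  exact (csSup_le' hub).antisymm (csSup_le_csSup' ⟨_, hub⟩ (Set.image_mono hΓΔ))

end SetDerives

namespace Pair

variable {Sig : Signature} {Γ Ψ : Set (Formula Sig)}

def partition (Γ Ψ : Set (Formula Sig)) : Pair Sig :=
  ⟨{φ ∈ Ψ | SetDerives Γ φ}, {φ ∈ Ψ | ¬ SetDerives Γ φ}⟩

theorem subset_partition_pos (h : Γ ⊆ Ψ) : Γ ⊆ (partition Γ Ψ).pos :=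
  fun _ hφ => ⟨h hφ, setDerives_of_mem hφ⟩

theorem neg_subset_partition_neg {p : Pair Sig} (hp : p.Consistent) (h : p.neg ⊆ Ψ) :
    p.neg ⊆ (partition p.pos Ψ).neg :=
  fun δ hδ => ⟨h hδ, hp δ hδ⟩

theorem maxCons_partition (Γ Ψ : Set (Formula Sig)) : (partition Γ Ψ).MaxCons Ψ := by
  refine ⟨fun δ hδ hder => hδ.2 (hder.of_forall_setDerives fun φ hφ => hφ.2),
    fun φ hφ => hφ.1, fun φ hφ => hφ.1, ?_⟩
  rintro ⟨qpos, qneg⟩ ⟨hpos, hposΨ, hneg, hnegΨ⟩ hq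
  have hpos' : qpos ⊆ (partition Γ Ψ).pos := fun φ hφ =>
    ⟨hposΨ hφ, by_contra fun hn => hq φ (hneg ⟨hposΨ hφ, hn⟩) (setDerives_of_mem hφ)⟩
  have hneg' : qneg ⊆ (partition Γ Ψ).neg := fun φ hφ =>
    ⟨hnegΨ hφ, fun hd => hq φ hφ (setDerives_of_mem (hpos ⟨hnegΨ hφ, hd⟩))⟩
  rw [Pair.mk.injEq]
  exact ⟨hpos'.antisymm hpos, hneg'.antisymm hneg⟩

theorem fullyWitnessed_partition {C : Set Sig.Const} (hfv : ∀ γ ∈ Γ, γ.fv = ∅)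
    (hC : ∀ γ ∈ Γ, γ.consts ⊆ C)
    (hwit : ∀ x ψ, .all x ψ ∈ Ψ →
      ∃ c ∉ C, c ∉ ψ.consts ∧ ψ.subst x (.const c) ∈ Ψ) :
    (partition Γ Ψ).FullyWitnessed := by
  rintro x ψ ⟨hmem, hnd⟩
  obtain ⟨c, hcC, hcψ, hsubst⟩ := hwit x ψ hmem
  exact ⟨c, hsubst, fun hd =>
    hnd (hd.all_of_subst_const hfv (fun γ hγ hc => hcC (hC γ hγ hc)) hcψ)⟩

end Pair

section ClSet

variable {Sig : Signature} {C : Set Sig.Const} {Φ : Set (Formula Sig)} {ψ : Formula Sig}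

theorem ClSet_mono {D : Set Sig.Const} (hCD : C ⊆ D) : ClSet C Φ ⊆ ClSet D Φ :=
  Set.biUnion_mono subset_rfl fun _ _ => Cl_mono hCD

theorem bddAbove_mdepth_ClSet (hΦ : Φ.Finite) : BddAbove (Formula.mdepth '' ClSet C Φ) := by
  obtain ⟨m, hm⟩ := (hΦ.image Formula.mdepth).bddAbove
  refine ⟨m, ?_⟩
  rintro _ ⟨ψ, hψ, rfl⟩
  obtain ⟨ρ, hρ, hψρ⟩ := Set.mem_iUnion₂.1 hψ
  exact (mdepth_le_of_mem_Cl hψρ).trans (hm ⟨ρ, hρ, rfl⟩)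

theorem fv_eq_empty_and_consts_subset_of_mem_ClSet
    (hΦ : ∀ φ ∈ Φ, φ.fv = ∅ ∧ φ.consts ⊆ C) (h : ψ ∈ ClSet C Φ) :
    ψ.fv = ∅ ∧ ψ.consts ⊆ C := by
  obtain ⟨ρ, hρ, hψρ⟩ := Set.mem_iUnion₂.1 h
  obtain ⟨T, hTC, -, hT⟩ := exists_consts_of_mem_Cl hψρ
  exact ⟨Set.subset_empty_iff.1 ((fv_subset_of_mem_Cl hψρ).trans (hΦ ρ hρ).1.le),
    hT.trans (Set.union_subset (hΦ ρ hρ).2 hTC)⟩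

theorem exists_fresh_subst_mem_ClSet {F : Finset Sig.Const} (hΦ : ∀ φ ∈ Φ, φ.consts ⊆ C)
    (hFC : ↑F ⊆ Cᶜ) (hF : ∀ φ ∈ Φ, φ.size < F.card) {x : ℕ}
    (h : .all x ψ ∈ ClSet (C ∪ ↑F) Φ) :
    ∃ c ∉ C, c ∉ ψ.consts ∧ ψ.subst x (.const c) ∈ ClSet (C ∪ ↑F) Φ := by
  obtain ⟨ρ, hρ, hψρ⟩ := Set.mem_iUnion₂.1 h
  obtain ⟨T, -, hTcard, hT⟩ := exists_consts_of_mem_Cl hψρ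
  obtain ⟨c, hcF, hcT⟩ := Finset.exists_mem_notMem_of_card_lt_card (s := T) (t := F)
    (by have := hF ρ hρ; omega)
  have hcC : c ∉ C := hFC hcF
  refine ⟨c, hcC, fun hcψ => ?_,
    Set.mem_iUnion₂.2 ⟨ρ, hρ, subst_mem_Cl hψρ (Or.inr hcF)⟩⟩
  rcases hT hcψ with hcρ | hcT'
  exacts [hcC (hΦ ρ hρ hcρ), hcT hcT']

end ClSet

/-- Lindenbaum-type lemma for QRC₁: any consistent pair p ⊆ Cl_C(Φ), for a
finite set Φ of closed formulas with constants among the finite set C, extends to a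
Cl_D(Φ)-maximal consistent fully witnessed pair q for some finite set of constants D ⊇ C,
with mdepth(q⁺) = mdepth(p⁺). -/
theorem qrc1_lindenbaum (Sig : Signature) [Infinite Sig.Const]
    (C : Set Sig.Const) (hC : C.Finite)
    (Φ : Set (Formula Sig)) (hΦfin : Φ.Finite)
    (hΦ : ∀ φ ∈ Φ, φ.fv = ∅ ∧ φ.consts ⊆ C)
    (p : Pair Sig) (hpos : p.pos ⊆ ClSet C Φ) (hneg : p.neg ⊆ ClSet C Φ)
    (hcons : p.Consistent) :
    ∃ (D : Set Sig.Const) (q : Pair Sig),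
      C ⊆ D ∧ D.Finite ∧ p.pos ⊆ q.pos ∧ p.neg ⊆ q.neg ∧
      q.MaxCons (ClSet D Φ) ∧ q.FullyWitnessed ∧
      mdepthSet q.pos = mdepthSet p.pos := by
  obtain ⟨b, hb⟩ := (hΦfin.image Formula.size).bddAbove
  obtain ⟨F, hFC, hFcard⟩ := hC.infinite_compl.exists_subset_card_eq (b + 1)
  have hCD : C ⊆ C ∪ ↑F := Set.subset_union_left
  have hposD : p.pos ⊆ ClSet (C ∪ ↑F) Φ := hpos.trans (ClSet_mono hCD)
  have hclosed : ∀ γ ∈ p.pos, γ.fv = ∅ ∧ γ.consts ⊆ C :=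
    fun γ hγ => fv_eq_empty_and_consts_subset_of_mem_ClSet hΦ (hpos hγ)
  have hwit : ∀ x ψ, .all x ψ ∈ ClSet (C ∪ ↑F) Φ →
      ∃ c ∉ C, c ∉ ψ.consts ∧ ψ.subst x (.const c) ∈ ClSet (C ∪ ↑F) Φ :=
    fun _ _ => exists_fresh_subst_mem_ClSet (fun φ hφ => (hΦ φ hφ).2) hFC
      fun φ hφ => hFcard ▸ Nat.lt_succ_of_le (hb ⟨φ, hφ, rfl⟩)
  refine ⟨C ∪ ↑F, .partition p.pos (ClSet (C ∪ ↑F) Φ), hCD, hC.union F.finite_toSet,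
    Pair.subset_partition_pos hposD,
    Pair.neg_subset_partition_neg hcons (hneg.trans (ClSet_mono hCD)),
    Pair.maxCons_partition _ _,
    Pair.fullyWitnessed_partition (fun γ hγ => (hclosed γ hγ).1)
      (fun γ hγ => (hclosed γ hγ).2) hwit,
    mdepthSet_eq_of_setDerives ((bddAbove_mdepth_ClSet hΦfin).mono (Set.image_mono hpos))
      (Pair.subset_partition_pos hposD) fun _ hφ => hφ.2⟩
end
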